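/- Let n ≥ 1 and let κ₁, κ₂, γ₁, γ₂, γ₃, C > 0, κ₂ᵢ > 0 (for i = 1,…,n−1) and γ₄ᵢ, γ₅ᵢ, γ₆ᵢ > 0 (for i = 1,…,n) be constants. Let Z₁, Z₂, h, Φ, V, I_t : ℝ → ℝ, Z₂ᵢ : ℝ → ℝ (i = 1,…,n−1), Iᵢ, uᵢ : ℝ → ℝ (i = 1,…,n), Ψ, Θ̃, Θ̃_c : ℝ → ℝ³, and C̃, L̃ᵢ, λ̃ᵢ, μ̃ᵢ : ℝ → ℝ (i = 1,…,n) be differentiable functions of time satisfying, at every t, the closed-loop error dynamics: C·Z₁′ = −κ₁·Z₁ + h·Z₂ − h·⟨Ψ, Θ̃⟩; Θ̃′ = γ₁·h·Z₁·Ψ; Z₂′ = −h·Z₁ − κ₂·Z₂ + Φ·⟨Ψ, Θ̃_c⟩ − Φ·I_t·C̃ − Σ_{i=1}^{n} L̃ᵢ·V − Σ_{i=1}^{n} λ̃ᵢ·Iᵢ + Σ_{i=1}^{n} μ̃ᵢ·uᵢ; Z₂ᵢ′ = −κ₂ᵢ·Z₂ᵢ − L̃ᵢ·V − λ̃ᵢ·Iᵢ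 + μ̃ᵢ·uᵢ for i = 1,…,n−1; together with the adaptation-error laws Θ̃_c′ = −γ₂·Φ·Z₂·Ψ; C̃′ = γ₃·Φ·I_t·Z₂; L̃ᵢ′ = γ₄ᵢ·V·(Z₂ + δᵢ·Z₂ᵢ); λ̃ᵢ′ = γ₅ᵢ·Iᵢ·(Z₂ + δᵢ·Z₂ᵢ); μ̃ᵢ′ = −γ₆ᵢ·uᵢ·(Z₂ + δᵢ·Z₂ᵢ), where δᵢ = 1 for i = 1,…,n−1 and δₙ = 0 (and Z₂ₙ is interpreted as 0). Then the composite Lyapunov function W = (1/2)·C·Z₁² + (1/2)·γ₁⁻¹·‖Θ̃‖² + (1/2)·Z₂² + (1/2)·Σ_{i=1}^{n−1} Z₂ᵢ² + (1/2)·γ₂⁻¹·‖Θ̃_c‖² + (1/2)·γ₃⁻¹·C̃² + (1/2)·Σ_{i=1}^{n} γ₄ᵢ⁻¹·L̃ᵢ² + (1/2)·Σ_{i=1}^{n} γ₅ᵢ⁻¹·λ̃ᵢ² + (1/2)·Σ_{i=1}^{n} γ₆ᵢ⁻¹·μ̃ᵢ² satisfies W′(t) = −κ₁·Z₁(t)²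 − κ₂·Z₂(t)² − Σ_{i=1}^{n−1} κ₂ᵢ·Z₂ᵢ(t)² at every t. -/

import Mathlib

/-!
Each term `½ c x²` of `W` differentiates to `x · (c x′)`, and the weight `c` is exactly the one
that cancels the gain in `x′` (the capacitance `C`, resp. an adaptation gain `γ`). The adaptation
laws are chosen so that each parameter-error term then cancels the matching regressor term in the
dynamics of `Z₁`, `Z₂` or `Z₂ᵢ`, and the coupling terms `± h Z₁ Z₂` of the two loops cancel too,
leaving only the damping terms.
-/

open Finset
open scoped RealInnerProductSpace

section QuadraticEnergy

variable {t : ℝ}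

theorem HasDerivAt.half_mul_sq {f : ℝ → ℝ} {f' : ℝ} (c : ℝ) (hf : HasDerivAt f f' t) :
    HasDerivAt (fun s => 1 / 2 * c * f s ^ 2) (f t * (c * f')) t :=
  ((hf.fun_pow 2).const_mul (1 / 2 * c)).congr_deriv (by push_cast; ring)

theorem HasDerivAt.half_sq {f : ℝ → ℝ} {f' : ℝ} (hf : HasDerivAt f f' t) :
    HasDerivAt (fun s => 1 / 2 * f s ^ 2) (f t * f') t :=
  ((hf.fun_pow 2).const_mul (1 / 2)).congr_deriv (by push_cast; ring)

theorem HasDerivAt.half_mul_norm_sq {E : Type*} [NormedAddCommGroup E] [InnerProductSpace ℝ E]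
    {f : ℝ → E} {f' : E} (c : ℝ) (hf : HasDerivAt f f' t) :
    HasDerivAt (fun s => 1 / 2 * c * ‖f s‖ ^ 2) (c * ⟪f t, f'⟫) t :=
  (hf.norm_sq.const_mul (1 / 2 * c)).congr_deriv (by ring)

theorem HasDerivAt.half_sum_mul_sq {ι : Type*} (u : Finset ι) (c : ι → ℝ) {f : ι → ℝ → ℝ}
    {f' : ι → ℝ} (hf : ∀ i ∈ u, HasDerivAt (f i) (f' i) t) :
    HasDerivAt (fun s => 1 / 2 * ∑ i ∈ u, c i * f i s ^ 2) (∑ i ∈ u, f i t * (c i * f' i)) t :=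
  ((HasDerivAt.fun_sum fun i hi => ((hf i hi).fun_pow 2).const_mul (c i)).const_mul
    (1 / 2)).congr_deriv (by rw [mul_sum]; exact sum_congr rfl fun i _ => by push_cast; ring)

theorem HasDerivAt.half_sum_sq {ι : Type*} (u : Finset ι) {f : ι → ℝ → ℝ} {f' : ι → ℝ}
    (hf : ∀ i ∈ u, HasDerivAt (f i) (f' i) t) :
    HasDerivAt (fun s => 1 / 2 * ∑ i ∈ u, f i s ^ 2) (∑ i ∈ u, f i t * f' i) t :=
  ((HasDerivAt.fun_sum fun i hi => (hf i hi).fun_pow 2).const_mul (1 / 2)).congr_deriv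
    (by rw [mul_sum]; exact sum_congr rfl fun i _ => by push_cast; ring)

end QuadraticEnergy

theorem Finset.sum_mul_inv_mul_mul_mul_add {ι K : Type*} [Field K] {s : Finset ι} {γ : ι → K}
    (hγ : ∀ i ∈ s, γ i ≠ 0) (f a w : ι → K) (z : K) :
    ∑ i ∈ s, f i * ((γ i)⁻¹ * (γ i * a i * (z + w i)))
      = z * ∑ i ∈ s, f i * a i + ∑ i ∈ s, f i * a i * w i := by
  rw [mul_sum, ← sum_add_distrib]
  exact sum_congr rfl fun i hi => by field_simp [hγ i hi]

theorem Fin.sum_mul_snoc_zero {R : Type*} [NonUnitalNonAssocSemiring R] {n : ℕ}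
    (g : Fin (n + 1) → R) (w : Fin n → R) :
    ∑ i, g i * Fin.snoc (α := fun _ => R) w 0 i = ∑ j, g j.castSucc * w j := by
  simp [Fin.sum_univ_castSucc]

/-- Converters are indexed by `Fin (m + 1)`, so `n = m + 1`; the current-sharing error `Z2 j` of
converter `j.castSucc` (`i = 1, …, n - 1`) is indexed by `j : Fin m`. -/
theorem composite_lyapunov_derivative_general
    (m : ℕ)
    (κ₁ κ₂ γ₁ γ₂ γ₃ C : ℝ)
    (hγ₁ : 0 < γ₁) (hγ₂ : 0 < γ₂) (hγ₃ : 0 < γ₃) (hC : 0 < C)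
    (κ₂ᵢ : Fin m → ℝ)
    (γ₄ γ₅ γ₆ : Fin (m + 1) → ℝ)
    (hγ₄ : ∀ i, 0 < γ₄ i) (hγ₅ : ∀ i, 0 < γ₅ i) (hγ₆ : ∀ i, 0 < γ₆ i)
    (Z₁ Z₂ h Φ V It : ℝ → ℝ)
    (Z2 : Fin m → ℝ → ℝ)
    (I u : Fin (m + 1) → ℝ → ℝ)
    (Ψ Θt Θc : ℝ → EuclideanSpace ℝ (Fin 3))
    (Ct : ℝ → ℝ) (Lt lam mu : Fin (m + 1) → ℝ → ℝ)
    -- closed-loop error dynamics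
    (hZ₁ : ∀ t : ℝ, HasDerivAt Z₁
      ((-κ₁ * Z₁ t + h t * Z₂ t - h t * (inner ℝ (Ψ t) (Θt t) : ℝ)) / C) t)
    (hΘt : ∀ t : ℝ, HasDerivAt Θt ((γ₁ * h t * Z₁ t) • Ψ t) t)
    (hZ₂ : ∀ t : ℝ, HasDerivAt Z₂
      (-h t * Z₁ t - κ₂ * Z₂ t + Φ t * (inner ℝ (Ψ t) (Θc t) : ℝ) - Φ t * It t * Ct t
        - (∑ i : Fin (m + 1), Lt i t * V t) - (∑ i : Fin (m + 1), lam i t * I i t)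
        + ∑ i : Fin (m + 1), mu i t * u i t) t)
    (hZ2 : ∀ (i : Fin m) (t : ℝ), HasDerivAt (Z2 i)
      (-κ₂ᵢ i * Z2 i t - Lt i.castSucc t * V t - lam i.castSucc t * I i.castSucc t
        + mu i.castSucc t * u i.castSucc t) t)
    -- adaptation-error laws (for i = 1, …, n - 1, with δᵢ = 1)
    (hΘc : ∀ t : ℝ, HasDerivAt Θc (-(γ₂ * Φ t * Z₂ t) • Ψ t) t)
    (hCt : ∀ t : ℝ, HasDerivAt Ct (γ₃ * Φ t * It t * Z₂ t) t)
    (hLt : ∀ (i : Fin m) (t : ℝ), HasDerivAt (Lt i.castSucc)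
      (γ₄ i.castSucc * V t * (Z₂ t + Z2 i t)) t)
    (hlam : ∀ (i : Fin m) (t : ℝ), HasDerivAt (lam i.castSucc)
      (γ₅ i.castSucc * I i.castSucc t * (Z₂ t + Z2 i t)) t)
    (hmu : ∀ (i : Fin m) (t : ℝ), HasDerivAt (mu i.castSucc)
      (-(γ₆ i.castSucc * u i.castSucc t * (Z₂ t + Z2 i t))) t)
    -- adaptation-error laws for i = n (with δₙ = 0)
    (hLtn : ∀ t : ℝ, HasDerivAt (Lt (Fin.last m)) (γ₄ (Fin.last m) * V t * Z₂ t) t)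
    (hlamn : ∀ t : ℝ, HasDerivAt (lam (Fin.last m))
      (γ₅ (Fin.last m) * I (Fin.last m) t * Z₂ t) t)
    (hmun : ∀ t : ℝ, HasDerivAt (mu (Fin.last m))
      (-(γ₆ (Fin.last m) * u (Fin.last m) t * Z₂ t)) t) :
    ∀ t : ℝ,
      HasDerivAt (fun s : ℝ =>
          (1 / 2) * C * (Z₁ s) ^ 2 + (1 / 2) * γ₁⁻¹ * ‖Θt s‖ ^ 2
            + (1 / 2) * (Z₂ s) ^ 2 + (1 / 2) * ∑ i : Fin m, (Z2 i s) ^ 2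
            + (1 / 2) * γ₂⁻¹ * ‖Θc s‖ ^ 2 + (1 / 2) * γ₃⁻¹ * (Ct s) ^ 2
            + (1 / 2) * ∑ i : Fin (m + 1), (γ₄ i)⁻¹ * (Lt i s) ^ 2
            + (1 / 2) * ∑ i : Fin (m + 1), (γ₅ i)⁻¹ * (lam i s) ^ 2
            + (1 / 2) * ∑ i : Fin (m + 1), (γ₆ i)⁻¹ * (mu i s) ^ 2)
        (-κ₁ * (Z₁ t) ^ 2 - κ₂ * (Z₂ t) ^ 2 - ∑ i : Fin m, κ₂ᵢ i * (Z2 i t) ^ 2) t := by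
  intro t
  -- the current-sharing errors extended by `Z₂ₙ = 0`, so that all `n` adaptation laws read alike
  set e : Fin (m + 1) → ℝ := Fin.snoc (fun j => Z2 j t) 0 with he
  have hLt' : ∀ i, HasDerivAt (Lt i) (γ₄ i * V t * (Z₂ t + e i)) t :=
    Fin.forall_fin_succ'.2 ⟨fun j => by simpa [e] using hLt j t, by simpa [e] using hLtn t⟩
  have hlam' : ∀ i, HasDerivAt (lam i) (γ₅ i * I i t * (Z₂ t + e i)) t :=
    Fin.forall_fin_succ'.2 ⟨fun j => by simpa [e] using hlam j t, by simpa [e] using hlamn t⟩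
  have hmu' : ∀ i, HasDerivAt (mu i) (γ₆ i * -u i t * (Z₂ t + e i)) t :=
    Fin.forall_fin_succ'.2 ⟨fun j => by simpa [e] using hmu j t, by simpa [e] using hmun t⟩
  have hW := (hZ₁ t).half_mul_sq C
    |>.fun_add ((hΘt t).half_mul_norm_sq γ₁⁻¹)
    |>.fun_add (hZ₂ t).half_sq
    |>.fun_add (HasDerivAt.half_sum_sq univ fun j _ => hZ2 j t)
    |>.fun_add ((hΘc t).half_mul_norm_sq γ₂⁻¹)
    |>.fun_add ((hCt t).half_mul_sq γ₃⁻¹)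
    |>.fun_add (HasDerivAt.half_sum_mul_sq univ (fun i => (γ₄ i)⁻¹) fun i _ => hLt' i)
    |>.fun_add (HasDerivAt.half_sum_mul_sq univ (fun i => (γ₅ i)⁻¹) fun i _ => hlam' i)
    |>.fun_add (HasDerivAt.half_sum_mul_sq univ (fun i => (γ₆ i)⁻¹) fun i _ => hmu' i)
  refine hW.congr_deriv ?_
  rw [sum_mul_inv_mul_mul_mul_add (fun i _ => (hγ₄ i).ne'),
    sum_mul_inv_mul_mul_mul_add (fun i _ => (hγ₅ i).ne'),
    sum_mul_inv_mul_mul_mul_add (fun i _ => (hγ₆ i).ne'), he, Fin.sum_mul_snoc_zero,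
    Fin.sum_mul_snoc_zero, Fin.sum_mul_snoc_zero, inner_smul_right, inner_smul_right,
    mul_div_cancel₀ _ hC.ne']
  simp only [mul_neg, neg_mul, mul_assoc, inv_mul_cancel_left₀ hγ₁.ne',
    inv_mul_cancel_left₀ hγ₂.ne', inv_mul_cancel_left₀ hγ₃.ne']
  simp only [mul_add, mul_sub, mul_neg, sum_add_distrib, sum_sub_distrib, sum_neg_distrib, sq,
    mul_comm, mul_left_comm, real_inner_comm]
  ring

/-- The composite Lyapunov derivative identity (equation (40)) of the paper's
Theorem 1, for a parallel system of `n = m + 1` DC-DC converters.  Converters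
are indexed by `Fin (m + 1)`; the current-sharing errors `Z2 i` for
`i = 1, …, n - 1` are indexed by `Fin m`, embedded via `Fin.castSucc`, and
`δᵢ = 1` for `i = 1, …, n - 1` while `δₙ = 0` (equivalently, `Z₂ₙ` is
interpreted as `0`). -/
theorem composite_lyapunov_derivative
    (m : ℕ)
    (κ₁ κ₂ γ₁ γ₂ γ₃ C : ℝ)
    (hκ₁ : 0 < κ₁) (hκ₂ : 0 < κ₂) (hγ₁ : 0 < γ₁) (hγ₂ : 0 < γ₂) (hγ₃ : 0 < γ₃) (hC : 0 < C)
    (κ₂ᵢ : Fin m → ℝ) (hκ₂ᵢ : ∀ i, 0 < κ₂ᵢ i)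
    (γ₄ γ₅ γ₆ : Fin (m + 1) → ℝ)
    (hγ₄ : ∀ i, 0 < γ₄ i) (hγ₅ : ∀ i, 0 < γ₅ i) (hγ₆ : ∀ i, 0 < γ₆ i)
    (Z₁ Z₂ h Φ V It : ℝ → ℝ)
    (Z2 : Fin m → ℝ → ℝ)
    (I u : Fin (m + 1) → ℝ → ℝ)
    (Ψ Θt Θc : ℝ → EuclideanSpace ℝ (Fin 3))
    (Ct : ℝ → ℝ) (Lt lam mu : Fin (m + 1) → ℝ → ℝ)
    -- closed-loop error dynamics
    (hZ₁ : ∀ t : ℝ, HasDerivAt Z₁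
      ((-κ₁ * Z₁ t + h t * Z₂ t - h t * (inner ℝ (Ψ t) (Θt t) : ℝ)) / C) t)
    (hΘt : ∀ t : ℝ, HasDerivAt Θt ((γ₁ * h t * Z₁ t) • Ψ t) t)
    (hZ₂ : ∀ t : ℝ, HasDerivAt Z₂
      (-h t * Z₁ t - κ₂ * Z₂ t + Φ t * (inner ℝ (Ψ t) (Θc t) : ℝ) - Φ t * It t * Ct t
        - (∑ i : Fin (m + 1), Lt i t * V t) - (∑ i : Fin (m + 1), lam i t * I i t)
        + ∑ i : Fin (m + 1), mu i t * u i t) t)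
    (hZ2 : ∀ (i : Fin m) (t : ℝ), HasDerivAt (Z2 i)
      (-κ₂ᵢ i * Z2 i t - Lt i.castSucc t * V t - lam i.castSucc t * I i.castSucc t
        + mu i.castSucc t * u i.castSucc t) t)
    -- adaptation-error laws (for i = 1, …, n - 1, with δᵢ = 1)
    (hΘc : ∀ t : ℝ, HasDerivAt Θc (-(γ₂ * Φ t * Z₂ t) • Ψ t) t)
    (hCt : ∀ t : ℝ, HasDerivAt Ct (γ₃ * Φ t * It t * Z₂ t) t)
    (hLt : ∀ (i : Fin m) (t : ℝ), HasDerivAt (Lt i.castSucc)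
      (γ₄ i.castSucc * V t * (Z₂ t + Z2 i t)) t)
    (hlam : ∀ (i : Fin m) (t : ℝ), HasDerivAt (lam i.castSucc)
      (γ₅ i.castSucc * I i.castSucc t * (Z₂ t + Z2 i t)) t)
    (hmu : ∀ (i : Fin m) (t : ℝ), HasDerivAt (mu i.castSucc)
      (-(γ₆ i.castSucc * u i.castSucc t * (Z₂ t + Z2 i t))) t)
    -- adaptation-error laws for i = n (with δₙ = 0)
    (hLtn : ∀ t : ℝ, HasDerivAt (Lt (Fin.last m)) (γ₄ (Fin.last m) * V t * Z₂ t) t)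
    (hlamn : ∀ t : ℝ, HasDerivAt (lam (Fin.last m))
      (γ₅ (Fin.last m) * I (Fin.last m) t * Z₂ t) t)
    (hmun : ∀ t : ℝ, HasDerivAt (mu (Fin.last m))
      (-(γ₆ (Fin.last m) * u (Fin.last m) t * Z₂ t)) t) :
    ∀ t : ℝ,
      HasDerivAt (fun s : ℝ =>
          (1 / 2) * C * (Z₁ s) ^ 2 + (1 / 2) * γ₁⁻¹ * ‖Θt s‖ ^ 2
            + (1 / 2) * (Z₂ s) ^ 2 + (1 / 2) * ∑ i : Fin m, (Z2 i s) ^ 2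
            + (1 / 2) * γ₂⁻¹ * ‖Θc s‖ ^ 2 + (1 / 2) * γ₃⁻¹ * (Ct s) ^ 2
            + (1 / 2) * ∑ i : Fin (m + 1), (γ₄ i)⁻¹ * (Lt i s) ^ 2
            + (1 / 2) * ∑ i : Fin (m + 1), (γ₅ i)⁻¹ * (lam i s) ^ 2
            + (1 / 2) * ∑ i : Fin (m + 1), (γ₆ i)⁻¹ * (mu i s) ^ 2)
        (-κ₁ * (Z₁ t) ^ 2 - κ₂ * (Z₂ t) ^ 2 - ∑ i : Fin m, κ₂ᵢ i * (Z2 i t) ^ 2) t :=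
  composite_lyapunov_derivative_general m κ₁ κ₂ γ₁ γ₂ γ₃ C hγ₁ hγ₂ hγ₃ hC κ₂ᵢ γ₄ γ₅ γ₆ hγ₄ hγ₅ hγ₆
    Z₁ Z₂ h Φ V It Z2 I u Ψ Θt Θc Ct Lt lam mu hZ₁ hΘt hZ₂ hZ2 hΘc hCt hLt hlam hmu hLtn hlamn hmun
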